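/- arXiv:2406.11166 — 2 statements merged into one kernel-verified Lean document; each statement's English description precedes it below -/
import Mathlib

section
/- Suppose each expert i ∈ N = {1,...,n} has a Bewley preference ≻ᵢ with representation (u, Cᵢ), and the decision maker's relation ≻₀ is either a hope-and-prepare preference with concordant representation (u, C₀, C₀) or a Bewley preference with representation (u, C₀), with the same u. Then the caution-for-incomparability condition holds if and only if co(⋃_{i=1}^n Cᵢ) ⊆ C₀. -/
/-!
Framework: Anscombe–Aumann acts, finitely additive probability measures,
simple acts, hope-and-prepare preferences (Bastianello–Hill style setup).
-/

open Set

section Framework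

variable (S : Type*) [MeasurableSpace S]

/-- The measurable sets (events) of `S`, as a subtype. -/
abbrev MSet := {A : Set S // MeasurableSet A}

/-- Finitely additive probability measures on `(S, Σ)`, viewed as real-valued
set functions on events.  The weak* topology is the topology of pointwise
convergence on events, i.e. the product topology on `MSet S → ℝ`. -/
def ProbCharges : Set (MSet S → ℝ) :=
  {p | (∀ A, 0 ≤ p A) ∧ p ⟨Set.univ, MeasurableSet.univ⟩ = 1 ∧
    ∀ A B : MSet S, Disjoint A.1 B.1 → p ⟨A.1 ∪ B.1, A.2.union B.2⟩ = p A + p B}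

end Framework

section Fns

variable {S : Type*} [MeasurableSpace S]

/-- `φ : S → ℝ` is a measurable simple function (an element of `B₀(Σ)`). -/
def IsSimpleFn (φ : S → ℝ) : Prop :=
  (Set.range φ).Finite ∧ ∀ y : ℝ, MeasurableSet (φ ⁻¹' {y})

/-- The integral `∫ φ dp` of a simple function `φ` against a finitely additive
measure `p` (junk value `0` if `φ` is not simple). -/
noncomputable def fInt (p : MSet S → ℝ) (φ : S → ℝ) : ℝ :=
  @dite _ (IsSimpleFn φ) (Classical.dec _)
    (fun h => ∑ y ∈ h.1.toFinset, y * p ⟨φ ⁻¹' {y}, h.2 y⟩) (fun _ => 0)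

/-- A functional `I : B₀(Σ) → ℝ` is monotonic. -/
def MonotonicFn (I : (S → ℝ) → ℝ) : Prop :=
  ∀ φ ψ, IsSimpleFn φ → IsSimpleFn ψ → (∀ s, φ s ≤ ψ s) → I φ ≤ I ψ

/-- A functional `I : B₀(Σ) → ℝ` is constant-linear: `I(aφ + b) = a I(φ) + b`
for `a ≥ 0`, `b ∈ ℝ`. -/
def ConstLinearFn (I : (S → ℝ) → ℝ) : Prop :=
  ∀ φ, IsSimpleFn φ → ∀ a : ℝ, 0 ≤ a → ∀ b : ℝ,
    I (fun s => a * φ s + b) = a * I φ + b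

end Fns

section Acts

variable {S : Type*} [MeasurableSpace S] {V : Type*} [AddCommGroup V] [Module ℝ V]

/-- `f : S → V` is a simple act with outcomes in `X`: it is `X`-valued,
takes finitely many values and is `Σ`-measurable. -/
def IsAct (X : Set V) (f : S → V) : Prop :=
  (∀ s, f s ∈ X) ∧ (Set.range f).Finite ∧ ∀ v : V, MeasurableSet (f ⁻¹' {v})

/-- Pointwise mixture `αf + (1-α)g` of two acts. -/
def mixAct (α : ℝ) (f g : S → V) : S → V := fun s => α • f s + (1 - α) • g s

/-- The constant act with outcome `x`. -/
def constAct (S : Type*) {V : Type*} (x : V) : S → V := fun _ => x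

/-- `u : V → ℝ` is affine on the convex set `X`. -/
def IsAffineOn (u : V → ℝ) (X : Set V) : Prop :=
  ∀ x ∈ X, ∀ y ∈ X, ∀ α : ℝ, 0 ≤ α → α ≤ 1 →
    u (α • x + (1 - α) • y) = α * u x + (1 - α) * u y

/-- `u` is non-constant on `X`. -/
def NonConstOn (u : V → ℝ) (X : Set V) : Prop := ∃ x ∈ X, ∃ y ∈ X, u x ≠ u y

/-- Expected utility `∫ u(f) dp` of the act `f` under the measure `p`. -/
noncomputable def EU (u : V → ℝ) (f : S → V) (p : MSet S → ℝ) : ℝ :=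
  fInt p (fun s => u (f s))

/-- Worst-case expected utility of `f` over the set of scenarios `C`. -/
noncomputable def minEU (u : V → ℝ) (C : Set (MSet S → ℝ)) (f : S → V) : ℝ :=
  sInf (EU u f '' C)

/-- Best-case expected utility of `f` over the set of scenarios `D`. -/
noncomputable def maxEU (u : V → ℝ) (D : Set (MSet S → ℝ)) (f : S → V) : ℝ :=
  sSup (EU u f '' D)

/-- `f` and `g` are incomparable (`f ⋈ g`). -/
def Incomp (R : (S → V) → (S → V) → Prop) (f g : S → V) : Prop := ¬ R f g ∧ ¬ R g f

end Acts

section Axioms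

variable {S : Type*} [MeasurableSpace S] {V : Type*} [AddCommGroup V] [Module ℝ V]
variable (X : Set V) (R : (S → V) → (S → V) → Prop)

/-- Axiom 1: `≻` is asymmetric and transitive on acts, and its restriction to
constant acts is non-trivial and negatively transitive. -/
def PrefAx1 : Prop :=
  (∀ f g, IsAct X f → IsAct X g → R f g → ¬ R g f) ∧
  (∀ f g h, IsAct X f → IsAct X g → IsAct X h → R f g → R g h → R f h) ∧
  (∃ x ∈ X, ∃ y ∈ X, R (constAct S x) (constAct S y)) ∧
  (∀ x ∈ X, ∀ y ∈ X, ∀ z ∈ X, ¬ R (constAct S x) (constAct S y) →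
    ¬ R (constAct S y) (constAct S z) → ¬ R (constAct S x) (constAct S z))

/-- Axiom 2 (continuity). -/
def PrefAx2 : Prop :=
  ∀ f g h, IsAct X f → IsAct X g → IsAct X h →
    IsOpen {α : Set.Icc (0 : ℝ) 1 | R (mixAct (α : ℝ) f g) h} ∧
    IsOpen {α : Set.Icc (0 : ℝ) 1 | R h (mixAct (α : ℝ) f g)}

/-- Axiom 3 (certainty independence). -/
def PrefAx3 : Prop :=
  ∀ f g, IsAct X f → IsAct X g → ∀ x ∈ X, ∀ α : ℝ, 0 < α → α < 1 →
    (R f g ↔ R (mixAct α f (constAct S x)) (mixAct α g (constAct S x)))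

/-- Axiom 4: for any outcome `x`, the upper and lower contour sets at the
constant act `x` are convex. -/
def PrefAx4 : Prop :=
  ∀ x ∈ X,
    (∀ f g, IsAct X f → IsAct X g → R f (constAct S x) → R g (constAct S x) →
      ∀ α : ℝ, 0 ≤ α → α ≤ 1 → R (mixAct α f g) (constAct S x)) ∧
    (∀ f g, IsAct X f → IsAct X g → R (constAct S x) f → R (constAct S x) g →
      ∀ α : ℝ, 0 ≤ α → α ≤ 1 → R (constAct S x) (mixAct α f g))

/-- Axiom 5 (monotonicity). -/
def PrefAx5 : Prop :=
  ∀ f g, IsAct X f → IsAct X g →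
    (∀ s : S, R (constAct S (f s)) (constAct S (g s))) → R f g

/-- Axiom 6: if every outcome incomparable to `f` is incomparable to `g`,
then `f` and `g` are incomparable. -/
def PrefAx6 : Prop :=
  ∀ f g, IsAct X f → IsAct X g →
    (∀ x ∈ X, Incomp R f (constAct S x) → Incomp R g (constAct S x)) → Incomp R f g

/-- Axiom 7: if `f ⋈ x`, `x ≻ g`, `g ⋈ y` and `f ≻ y`, then `f ≻ g`. -/
def PrefAx7 : Prop :=
  ∀ f g, IsAct X f → IsAct X g → ∀ x ∈ X, ∀ y ∈ X,
    Incomp R f (constAct S x) → R (constAct S x) g →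
    Incomp R g (constAct S y) → R f (constAct S y) → R f g

end Axioms

section Reps

variable {S : Type*} [MeasurableSpace S] {V : Type*} [AddCommGroup V] [Module ℝ V]

/-- `(u, C, D)` is a hope-and-prepare representation of `R`. -/
def IsHPRep (X : Set V) (R : (S → V) → (S → V) → Prop) (u : V → ℝ)
    (C D : Set (MSet S → ℝ)) : Prop :=
  IsAffineOn u X ∧ NonConstOn u X ∧
  C.Nonempty ∧ D.Nonempty ∧ C ⊆ ProbCharges S ∧ D ⊆ ProbCharges S ∧
  IsCompact C ∧ IsCompact D ∧ Convex ℝ C ∧ Convex ℝ D ∧ (C ∩ D).Nonempty ∧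
  ∀ f g, IsAct X f → IsAct X g →
    (R f g ↔ (minEU u C g < minEU u C f ∧ maxEU u D g < maxEU u D f))

/-- `(u, C)` is a Bewley representation of `R`. -/
def IsBewleyRep (X : Set V) (R : (S → V) → (S → V) → Prop) (u : V → ℝ)
    (C : Set (MSet S → ℝ)) : Prop :=
  IsAffineOn u X ∧ NonConstOn u X ∧
  C.Nonempty ∧ C ⊆ ProbCharges S ∧ IsCompact C ∧ Convex ℝ C ∧
  ∀ f g, IsAct X f → IsAct X g → (R f g ↔ ∀ p ∈ C, EU u g p < EU u f p)

/-- `(u, C, D)` is a twofold multi-prior representation of `R`. -/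
def IsTwofoldRep (X : Set V) (R : (S → V) → (S → V) → Prop) (u : V → ℝ)
    (C D : Set (MSet S → ℝ)) : Prop :=
  IsAffineOn u X ∧ NonConstOn u X ∧
  C.Nonempty ∧ D.Nonempty ∧ C ⊆ ProbCharges S ∧ D ⊆ ProbCharges S ∧
  IsCompact C ∧ IsCompact D ∧ Convex ℝ C ∧ Convex ℝ D ∧ (C ∩ D).Nonempty ∧
  ∀ f g, IsAct X f → IsAct X g → (R f g ↔ maxEU u D g < minEU u C f)

end Reps

section Helpers

variable {S : Type*} [MeasurableSpace S]

lemma charge_congr (q : MSet S → ℝ) {A B : Set S} (hA : MeasurableSet A)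
    (hB : MeasurableSet B) (h : A = B) : q ⟨A, hA⟩ = q ⟨B, hB⟩ := by
  subst h; rfl

lemma charge_empty {q : MSet S → ℝ} (hq : q ∈ ProbCharges S) :
    q ⟨∅, MeasurableSet.empty⟩ = 0 := by
  have h := hq.2.2 ⟨∅, MeasurableSet.empty⟩ ⟨∅, MeasurableSet.empty⟩ (by simp)
  have h2 : q ⟨(∅ : Set S) ∪ ∅, MeasurableSet.empty.union MeasurableSet.empty⟩
      = q ⟨∅, MeasurableSet.empty⟩ := charge_congr q _ _ (by simp)
  rw [h2] at h
  linarith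

lemma charge_biUnion {ι : Type*} {q : MSet S → ℝ} (hq : q ∈ ProbCharges S)
    (E : ι → Set S) (hE : ∀ i, MeasurableSet (E i)) :
    ∀ F : Finset ι, (∀ i ∈ F, ∀ j ∈ F, i ≠ j → Disjoint (E i) (E j)) →
      q ⟨⋃ i ∈ F, E i, F.measurableSet_biUnion (fun i _ => hE i)⟩
        = ∑ i ∈ F, q ⟨E i, hE i⟩ := by
  classical
  intro F
  induction F using Finset.induction_on with
  | empty =>
    intro _
    rw [Finset.sum_empty, charge_congr q _ MeasurableSet.empty (by simp)]
    exact charge_empty hq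
  | @insert a F ha ih =>
    intro hd
    have hdF : ∀ i ∈ F, ∀ j ∈ F, i ≠ j → Disjoint (E i) (E j) :=
      fun i hi j hj => hd i (Finset.mem_insert_of_mem hi) j (Finset.mem_insert_of_mem hj)
    have hUm : MeasurableSet (⋃ i ∈ F, E i) := F.measurableSet_biUnion (fun i _ => hE i)
    have hdisj : Disjoint (E a) (⋃ i ∈ F, E i) := by
      rw [Set.disjoint_iUnion_right]
      intro i
      rw [Set.disjoint_iUnion_right]
      intro hi
      exact hd a (Finset.mem_insert_self a F) i (Finset.mem_insert_of_mem hi)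
        (fun h => ha (h ▸ hi))
    have key := hq.2.2 ⟨E a, hE a⟩ ⟨⋃ i ∈ F, E i, hUm⟩ hdisj
    rw [Finset.sum_insert ha, ← ih hdF, ← key]
    refine charge_congr q _ _ ?_
    show ⋃ i ∈ insert a F, E i = E a ∪ ⋃ i ∈ F, E i
    exact Finset.set_biUnion_insert a F E

/-- A measurable finite cover `E` of `S` with pairwise disjoint cells. -/
def IsMPartition {ι : Type*} (F : Finset ι) (E : ι → Set S) : Prop :=
  (∀ i, MeasurableSet (E i)) ∧
  (∀ i ∈ F, ∀ j ∈ F, i ≠ j → Disjoint (E i) (E j)) ∧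
  (∀ s : S, ∃ i ∈ F, s ∈ E i)

lemma charge_partition_sum {ι : Type*} {q : MSet S → ℝ} (hq : q ∈ ProbCharges S)
    {F : Finset ι} {E : ι → Set S} (hpart : IsMPartition F E) :
    ∑ i ∈ F, q ⟨E i, hpart.1 i⟩ = 1 := by
  rw [← charge_biUnion hq E hpart.1 F hpart.2.1]
  rw [charge_congr q _ MeasurableSet.univ
    (by ext s; simp only [Set.mem_iUnion, Set.mem_univ, iff_true]
        obtain ⟨i, hi, hsi⟩ := hpart.2.2 s; exact ⟨i, hi, hsi⟩)]
  exact hq.2.1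

lemma fInt_eq {ψ : S → ℝ} (h : IsSimpleFn ψ) (q : MSet S → ℝ) :
    fInt q ψ = ∑ y ∈ h.1.toFinset, y * q ⟨ψ ⁻¹' {y}, h.2 y⟩ := by
  unfold fInt
  rw [dif_pos h]

lemma isSimpleFn_partition {ι : Type*} {F : Finset ι} {E : ι → Set S}
    (hpart : IsMPartition F E) (c : ι → ℝ) {ψ : S → ℝ}
    (hψ : ∀ i ∈ F, ∀ s ∈ E i, ψ s = c i) : IsSimpleFn ψ := by
  classical
  constructor
  · apply Set.Finite.subset (F.finite_toSet.image c)
    rintro _ ⟨s, rfl⟩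
    obtain ⟨i, hi, hsi⟩ := hpart.2.2 s
    exact ⟨i, hi, (hψ i hi s hsi).symm⟩
  · intro y
    have hpre : ψ ⁻¹' {y} = ⋃ i ∈ F.filter (fun i => c i = y), E i := by
      ext s
      simp only [Set.mem_preimage, Set.mem_singleton_iff, Set.mem_iUnion, Finset.mem_filter]
      constructor
      · intro hst
        obtain ⟨i, hi, hsi⟩ := hpart.2.2 s
        exact ⟨i, ⟨hi, by rw [← hψ i hi s hsi, hst]⟩, hsi⟩
      · rintro ⟨i, ⟨hi, hci⟩, hsi⟩
        rw [hψ i hi s hsi, hci]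
    rw [hpre]
    exact Finset.measurableSet_biUnion _ (fun i _ => hpart.1 i)

lemma fInt_partition {ι : Type*} {q : MSet S → ℝ} (hq : q ∈ ProbCharges S)
    {F : Finset ι} {E : ι → Set S} (hpart : IsMPartition F E) (c : ι → ℝ) {ψ : S → ℝ}
    (hψ : ∀ i ∈ F, ∀ s ∈ E i, ψ s = c i) :
    fInt q ψ = ∑ i ∈ F, c i * q ⟨E i, hpart.1 i⟩ := by
  classical
  obtain ⟨hE, hd, hcov⟩ := hpart
  have hs : IsSimpleFn ψ := isSimpleFn_partition ⟨hE, hd, hcov⟩ c hψ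
  have hpre : ∀ t : ℝ, ψ ⁻¹' {t} = ⋃ i ∈ F.filter (fun i => c i = t), E i := by
    intro t
    ext s
    simp only [Set.mem_preimage, Set.mem_singleton_iff, Set.mem_iUnion, Finset.mem_filter]
    constructor
    · intro hst
      obtain ⟨i, hi, hsi⟩ := hcov s
      exact ⟨i, ⟨hi, by rw [← hψ i hi s hsi, hst]⟩, hsi⟩
    · rintro ⟨i, ⟨hi, hci⟩, hsi⟩
      rw [hψ i hi s hsi, hci]
  rw [fInt_eq hs]
  have hqpre : ∀ t, q ⟨ψ ⁻¹' {t}, hs.2 t⟩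
      = ∑ i ∈ F.filter (fun i => c i = t), q ⟨E i, hE i⟩ := by
    intro t
    rw [charge_congr q _ ((F.filter (fun i => c i = t)).measurableSet_biUnion
      (fun i _ => hE i)) (hpre t)]
    exact charge_biUnion hq E hE _ (fun i hi j hj =>
      hd i (Finset.mem_filter.mp hi).1 j (Finset.mem_filter.mp hj).1)
  set R := hs.1.toFinset with hR
  set F' := F.filter (fun i => (E i).Nonempty) with hF'
  have hqz : ∀ i, E i = ∅ → q ⟨E i, hE i⟩ = 0 := by
    intro i h
    rw [charge_congr q _ MeasurableSet.empty h]
    exact charge_empty hq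
  have step1 : ∑ t ∈ R, t * q ⟨ψ ⁻¹' {t}, hs.2 t⟩
      = ∑ t ∈ R, ∑ i ∈ F'.filter (fun i => c i = t), c i * q ⟨E i, hE i⟩ := by
    refine Finset.sum_congr rfl (fun t _ => ?_)
    rw [hqpre t, Finset.mul_sum]
    have e1 : ∑ i ∈ F.filter (fun i => c i = t), t * q ⟨E i, hE i⟩
        = ∑ i ∈ F.filter (fun i => c i = t), c i * q ⟨E i, hE i⟩ :=
      Finset.sum_congr rfl (fun i hi => by rw [(Finset.mem_filter.mp hi).2])
    rw [e1]
    refine (Finset.sum_subset ?_ ?_).symm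
    · intro i hi
      simp only [hF', Finset.mem_filter] at hi ⊢
      exact ⟨hi.1.1, hi.2⟩
    · intro i hi hni
      have hiF := (Finset.mem_filter.mp hi).1
      have hct := (Finset.mem_filter.mp hi).2
      have hemp : E i = ∅ := by
        by_contra hne
        exact hni (Finset.mem_filter.mpr ⟨Finset.mem_filter.mpr
          ⟨hiF, Set.nonempty_iff_ne_empty.mpr hne⟩, hct⟩)
      rw [hqz i hemp, mul_zero]
  have hmaps : ∀ i ∈ F', c i ∈ R := by
    intro i hi
    obtain ⟨hiF, s, hsi⟩ := Finset.mem_filter.mp hi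
    rw [hR, Set.Finite.mem_toFinset]
    exact ⟨s, hψ i hiF s hsi⟩
  have step3 : ∑ t ∈ R, ∑ i ∈ F'.filter (fun i => c i = t), c i * q ⟨E i, hE i⟩
      = ∑ i ∈ F', c i * q ⟨E i, hE i⟩ :=
    Finset.sum_fiberwise_of_maps_to hmaps _
  have step4 : ∑ i ∈ F', c i * q ⟨E i, hE i⟩ = ∑ i ∈ F, c i * q ⟨E i, hE i⟩ := by
    refine Finset.sum_subset (Finset.filter_subset _ _) ?_
    intro i hi hni
    have hemp : E i = ∅ := by
      by_contra hne
      exact hni (Finset.mem_filter.mpr ⟨hi, Set.nonempty_iff_ne_empty.mpr hne⟩)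
    rw [hqz i hemp, mul_zero]
  rw [step1, step3, step4]

lemma fInt_bounds {q : MSet S → ℝ} (hq : q ∈ ProbCharges S) {ψ : S → ℝ}
    (h : IsSimpleFn ψ) {lo hi : ℝ} (hlo : ∀ s, lo ≤ ψ s) (hhi : ∀ s, ψ s ≤ hi) :
    lo ≤ fInt q ψ ∧ fInt q ψ ≤ hi := by
  classical
  have hpart : IsMPartition (S := S) h.1.toFinset (fun t => ψ ⁻¹' {t}) := by
    refine ⟨fun t => h.2 t, ?_, ?_⟩
    · intro t _ t' _ hne
      rw [Set.disjoint_left]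
      rintro s hs hs'
      exact hne (hs.symm.trans hs')
    · intro s
      exact ⟨ψ s, Set.Finite.mem_toFinset _ |>.mpr ⟨s, rfl⟩, rfl⟩
  have hval := fInt_partition hq hpart id (fun t _ s hs => hs)
  have hsum := charge_partition_sum hq hpart
  have hnn : ∀ t, 0 ≤ q ⟨ψ ⁻¹' {t}, h.2 t⟩ := fun t => hq.1 _
  have hmem : ∀ t ∈ h.1.toFinset, lo ≤ t ∧ t ≤ hi := by
    intro t ht
    obtain ⟨s, rfl⟩ := Set.Finite.mem_toFinset _ |>.mp ht
    exact ⟨hlo s, hhi s⟩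
  constructor
  · rw [hval]
    calc lo = ∑ t ∈ h.1.toFinset, lo * q ⟨ψ ⁻¹' {t}, h.2 t⟩ := by
          rw [← Finset.mul_sum, hsum, mul_one]
      _ ≤ ∑ t ∈ h.1.toFinset, id t * q ⟨ψ ⁻¹' {t}, h.2 t⟩ :=
          Finset.sum_le_sum (fun t ht =>
            mul_le_mul_of_nonneg_right (hmem t ht).1 (hnn t))
  · rw [hval]
    calc ∑ t ∈ h.1.toFinset, id t * q ⟨ψ ⁻¹' {t}, h.2 t⟩
        ≤ ∑ t ∈ h.1.toFinset, hi * q ⟨ψ ⁻¹' {t}, h.2 t⟩ :=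
          Finset.sum_le_sum (fun t ht =>
            mul_le_mul_of_nonneg_right (hmem t ht).2 (hnn t))
      _ = hi := by rw [← Finset.mul_sum, hsum, mul_one]

lemma continuous_fInt {ψ : S → ℝ} (h : IsSimpleFn ψ) :
    Continuous (fun q : MSet S → ℝ => fInt q ψ) := by
  have he : (fun q : MSet S → ℝ => fInt q ψ)
      = fun q => ∑ y ∈ h.1.toFinset, y * q ⟨ψ ⁻¹' {y}, h.2 y⟩ := by
    funext q; exact fInt_eq h q
  rw [he]
  exact continuous_finset_sum _ (fun y _ => continuous_const.mul (continuous_apply _))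

end Helpers
section Helpers2

variable {S : Type*} [MeasurableSpace S] {V : Type*} [AddCommGroup V] [Module ℝ V]

lemma isAct_const {X : Set V} {x : V} (hx : x ∈ X) : IsAct X (constAct S x) := by
  refine ⟨fun _ => hx, (Set.finite_singleton x).subset ?_, ?_⟩
  · rintro _ ⟨s, rfl⟩; rfl
  · intro v
    rcases eq_or_ne x v with h | h
    · have he : constAct S x ⁻¹' {v} = Set.univ := by ext s; simp [constAct, h]
      rw [he]; exact MeasurableSet.univ
    · have he : constAct S x ⁻¹' {v} = ∅ := by ext s; simp [constAct, h]
      rw [he]; exact MeasurableSet.empty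

lemma isSimpleFn_comp {X : Set V} {f : S → V} (hf : IsAct X f) (u : V → ℝ) :
    IsSimpleFn (fun s => u (f s)) := by
  classical
  constructor
  · apply Set.Finite.subset (hf.2.1.image u)
    rintro _ ⟨s, rfl⟩
    exact ⟨f s, ⟨s, rfl⟩, rfl⟩
  · intro y
    have he : (fun s => u (f s)) ⁻¹' {y}
        = ⋃ v ∈ hf.2.1.toFinset.filter (fun v => u v = y), f ⁻¹' {v} := by
      ext s
      simp only [Set.mem_preimage, Set.mem_singleton_iff, Set.mem_iUnion,
        Finset.mem_filter, Set.Finite.mem_toFinset]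
      constructor
      · intro h
        exact ⟨f s, ⟨⟨s, rfl⟩, h⟩, rfl⟩
      · rintro ⟨v, ⟨_, huv⟩, hfv⟩
        rw [hfv, huv]
    rw [he]
    exact Finset.measurableSet_biUnion _ (fun v _ => hf.2.2 v)

lemma EU_const [Nonempty S] {q : MSet S → ℝ} (hq : q ∈ ProbCharges S)
    (x : V) (u : V → ℝ) : EU u (constAct S x) q = u x := by
  have hpart : IsMPartition (S := S) (Finset.univ : Finset Unit) (fun _ => Set.univ) :=
    ⟨fun _ => MeasurableSet.univ,
     fun i _ j _ hij => absurd (Subsingleton.elim i j) hij,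
     fun s => ⟨(), Finset.mem_univ _, trivial⟩⟩
  have h := fInt_partition hq hpart (fun _ => u x)
    (ψ := fun _ : S => u x) (fun _ _ _ _ => rfl)
  show fInt q (fun _ => u x) = u x
  rw [h]
  simp [hq.2.1]

lemma EU_continuous {X : Set V} {f : S → V} (hf : IsAct X f) (u : V → ℝ) :
    Continuous (EU u f) :=
  continuous_fInt (isSimpleFn_comp hf u)

lemma minmax_const [Nonempty S] {C : Set (MSet S → ℝ)} (hC : C.Nonempty)
    (hCP : C ⊆ ProbCharges S) (x : V) (u : V → ℝ) :
    minEU u C (constAct S x) = u x ∧ maxEU u C (constAct S x) = u x := by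
  have himg : EU u (constAct S x) '' C = {u x} := by
    ext z
    simp only [Set.mem_image, Set.mem_singleton_iff]
    constructor
    · rintro ⟨q, hqC, rfl⟩
      exact EU_const (hCP hqC) x u
    · rintro rfl
      obtain ⟨q, hqC⟩ := hC
      exact ⟨q, hqC, EU_const (hCP hqC) x u⟩
  constructor
  · show sInf (EU u (constAct S x) '' C) = u x
    rw [himg]; exact csInf_singleton _
  · show sSup (EU u (constAct S x) '' C) = u x
    rw [himg]; exact csSup_singleton _

end Helpers2

section Cells

variable {S : Type*} [MeasurableSpace S]

/-- The atom of the algebra generated by the events in `F` determined by `T ⊆ F`. -/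
def cellOf (F T : Finset (MSet S)) : Set S := {s | ∀ A ∈ F, (s ∈ A.1 ↔ A ∈ T)}

lemma cellOf_measurable (F T : Finset (MSet S)) : MeasurableSet (cellOf F T) := by
  classical
  have he : cellOf F T = ⋂ A ∈ F, (if A ∈ T then A.1 else A.1ᶜ) := by
    ext s
    simp only [cellOf, Set.mem_setOf_eq, Set.mem_iInter]
    refine forall_congr' (fun A => forall_congr' (fun hA => ?_))
    by_cases h : A ∈ T <;> simp [h]
  rw [he]
  exact MeasurableSet.biInter F.countable_toSet
    (fun A _ => by split_ifs; exacts [A.2, A.2.compl])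

open Classical in
/-- The atom containing `s`. -/
noncomputable def Tof (F : Finset (MSet S)) (s : S) : Finset (MSet S) :=
  F.filter (fun A => s ∈ A.1)

lemma mem_Tof {F : Finset (MSet S)} {s : S} {A : MSet S} :
    A ∈ Tof F s ↔ A ∈ F ∧ s ∈ A.1 := by
  classical
  simp [Tof, Finset.mem_filter]

lemma Tof_subset (F : Finset (MSet S)) (s : S) : Tof F s ⊆ F :=
  fun A hA => (mem_Tof.mp hA).1

lemma mem_cellOf_Tof (F : Finset (MSet S)) (s : S) : s ∈ cellOf F (Tof F s) := by
  intro A hA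
  rw [mem_Tof]
  exact ⟨fun h => ⟨hA, h⟩, fun h => h.2⟩

lemma eq_Tof_of_mem_cellOf {F T : Finset (MSet S)} (hT : T ⊆ F) {s : S}
    (hs : s ∈ cellOf F T) : T = Tof F s := by
  ext A
  rw [mem_Tof]
  constructor
  · intro hAT
    exact ⟨hT hAT, (hs A (hT hAT)).mpr hAT⟩
  · rintro ⟨hAF, hsA⟩
    exact (hs A hAF).mp hsA

lemma cellOf_disjoint {F T T' : Finset (MSet S)} (hT : T ⊆ F) (hT' : T' ⊆ F)
    (hne : T ≠ T') : Disjoint (cellOf F T) (cellOf F T') := by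
  rw [Set.disjoint_left]
  intro s hs hs'
  exact hne ((eq_Tof_of_mem_cellOf hT hs).trans (eq_Tof_of_mem_cellOf hT' hs').symm)

lemma cellOf_partition (F : Finset (MSet S)) :
    IsMPartition (S := S) F.powerset (cellOf F) := by
  refine ⟨cellOf_measurable F, ?_, ?_⟩
  · intro T hT T' hT' hne
    exact cellOf_disjoint (Finset.mem_powerset.mp hT) (Finset.mem_powerset.mp hT') hne
  · intro s
    exact ⟨Tof F s, Finset.mem_powerset.mpr (Tof_subset F s), mem_cellOf_Tof F s⟩

lemma cell_sum_eq {q : MSet S → ℝ} (hq : q ∈ ProbCharges S) (F : Finset (MSet S))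
    (a : MSet S → ℝ) :
    ∑ T ∈ F.powerset, (∑ A ∈ T, a A) * q ⟨cellOf F T, cellOf_measurable F T⟩
      = ∑ A ∈ F, a A * q A := by
  classical
  have h1 : ∑ T ∈ F.powerset, (∑ A ∈ T, a A) * q ⟨cellOf F T, cellOf_measurable F T⟩
      = ∑ T ∈ F.powerset, ∑ A ∈ T, a A * q ⟨cellOf F T, cellOf_measurable F T⟩ :=
    Finset.sum_congr rfl (fun T _ => Finset.sum_mul _ _ _)
  have h2 : ∑ T ∈ F.powerset, ∑ A ∈ T, a A * q ⟨cellOf F T, cellOf_measurable F T⟩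
      = ∑ A ∈ F, ∑ T ∈ F.powerset.filter (fun T => A ∈ T),
          a A * q ⟨cellOf F T, cellOf_measurable F T⟩ := by
    refine Finset.sum_comm' ?_
    intro T A
    simp only [Finset.mem_powerset, Finset.mem_filter]
    constructor
    · rintro ⟨hTF, hAT⟩
      exact ⟨⟨hTF, hAT⟩, hTF hAT⟩
    · rintro ⟨⟨hTF, hAT⟩, _⟩
      exact ⟨hTF, hAT⟩
  have h3 : ∀ A ∈ F, ∑ T ∈ F.powerset.filter (fun T => A ∈ T),
      q ⟨cellOf F T, cellOf_measurable F T⟩ = q A := by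
    intro A hA
    have hset : A.1 = ⋃ T ∈ F.powerset.filter (fun T => A ∈ T), cellOf F T := by
      ext s
      simp only [Set.mem_iUnion, Finset.mem_filter, Finset.mem_powerset]
      constructor
      · intro hsA
        exact ⟨Tof F s, ⟨Tof_subset F s, mem_Tof.mpr ⟨hA, hsA⟩⟩, mem_cellOf_Tof F s⟩
      · rintro ⟨T, ⟨hTF, hAT⟩, hsT⟩
        exact (hsT A hA).mpr hAT
    have := charge_biUnion hq (cellOf F) (cellOf_measurable F)
      (F.powerset.filter (fun T => A ∈ T)) (fun T hT T' hT' hne =>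
        cellOf_disjoint (Finset.mem_powerset.mp (Finset.mem_filter.mp hT).1)
          (Finset.mem_powerset.mp (Finset.mem_filter.mp hT').1) hne)
    rw [← this]
    exact charge_congr q _ A.2 hset.symm
  rw [h1, h2]
  refine Finset.sum_congr rfl (fun A hA => ?_)
  rw [← Finset.mul_sum, h3 A hA]

end Cells

section CLM

lemma clm_pi_finite_support {I : Type*} [DecidableEq I] (φ : (I → ℝ) →L[ℝ] ℝ) :
    ∃ F : Finset I, ∀ q : I → ℝ, φ q = ∑ A ∈ F, q A * φ (Pi.single A 1) := by
  have hcont : φ ⁻¹' Metric.ball 0 1 ∈ nhds (0 : I → ℝ) := by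
    have h := φ.continuous.continuousAt (x := 0)
    apply h.preimage_mem_nhds
    rw [map_zero]
    exact Metric.ball_mem_nhds 0 one_pos
  obtain ⟨U, hUsub, hUopen, hU0⟩ := mem_nhds_iff.mp hcont
  obtain ⟨F, w, hw, hsub⟩ := isOpen_pi_iff.mp hUopen 0 hU0
  refine ⟨F, fun q => ?_⟩
  have hker : ∀ r : I → ℝ, (∀ i ∈ F, r i = 0) → φ r = 0 := by
    intro r hr
    by_contra hne
    have hmem : ∀ t : ℝ, t • r ∈ (↑F : Set I).pi w := by
      intro t i hi
      have h0 : (t • r) i = 0 := by simp [hr i hi]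
      rw [h0]
      simpa using (hw i hi).2
    have hb : ∀ t : ℝ, |φ (t • r)| < 1 := by
      intro t
      have hball := hUsub (hsub (hmem t))
      simp only [Set.mem_preimage, Metric.mem_ball, Real.dist_eq, sub_zero] at hball
      exact hball
    have h2 := hb (2 / φ r)
    rw [map_smul, smul_eq_mul, div_mul_cancel₀ 2 hne] at h2
    norm_num at h2
  set g : I → ℝ := ∑ i ∈ F, Pi.single i (q i) with hg
  have hgj : ∀ j ∈ F, g j = q j := by
    intro j hj
    rw [hg, Finset.sum_apply]
    rw [Finset.sum_eq_single_of_mem j hj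
      (fun i _ hij => by rw [Pi.single_eq_of_ne (Ne.symm hij)])]
    simp
  have hφr : φ (q - g) = 0 := hker _ (fun j hj => by simp [hgj j hj])
  have hqg : φ q = φ g := by
    have h2 : φ q - φ g = 0 := by rw [← map_sub]; exact hφr
    linarith
  rw [hqg, hg, map_sum]
  refine Finset.sum_congr rfl (fun i _ => ?_)
  have hsingle : Pi.single i (q i) = q i • (Pi.single i 1 : I → ℝ) := by
    funext j
    by_cases h : j = i <;> simp [Pi.single_apply, h]
  rw [hsingle, map_smul, smul_eq_mul]

end CLM
section Statement

variable {S : Type*} [MeasurableSpace S] [Nonempty S]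
variable {V : Type*} [AddCommGroup V] [Module ℝ V]

/-- Proposition 3(ii): with experts `i ∈ {1,…,n}` holding
Bewley preferences `(u, Cᵢ)` and a DM holding either a concordant
hope-and-prepare preference `(u, C₀, C₀)` or a Bewley preference `(u, C₀)`,
caution for incomparability holds iff `co(⋃ᵢ Cᵢ) ⊆ C₀`. -/
theorem statement9 (X : Set V) (hX : Convex ℝ X) (hX2 : ∃ x ∈ X, ∃ y ∈ X, x ≠ y)
    {n : ℕ} (hn : 0 < n)
    (Rexp : Fin n → (S → V) → (S → V) → Prop) (R0 : (S → V) → (S → V) → Prop)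
    (u : V → ℝ) (Ci : Fin n → Set (MSet S → ℝ)) (C0 : Set (MSet S → ℝ))
    (hexp : ∀ i, IsBewleyRep X (Rexp i) u (Ci i))
    (hdm : IsHPRep X R0 u C0 C0 ∨ IsBewleyRep X R0 u C0) :
    (∀ f, IsAct X f → ∀ x ∈ X,
        (∃ i, Incomp (Rexp i) f (constAct S x)) → Incomp R0 f (constAct S x)) ↔
      convexHull ℝ (⋃ i, Ci i) ⊆ C0 := by
  classical
  have hu_aff : IsAffineOn u X := by rcases hdm with h | h <;> exact h.1
  have hu_nc : NonConstOn u X := by rcases hdm with h | h <;> exact h.2.1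
  have hC0ne : C0.Nonempty := by
    rcases hdm with ⟨_, _, h, _⟩ | ⟨_, _, h, _⟩ <;> exact h
  have hC0P : C0 ⊆ ProbCharges S := by
    rcases hdm with ⟨_, _, _, _, h, _⟩ | ⟨_, _, _, h, _⟩ <;> exact h
  have hC0cpt : IsCompact C0 := by
    rcases hdm with ⟨_, _, _, _, _, _, h, _⟩ | ⟨_, _, _, _, h, _⟩ <;> exact h
  have hC0cvx : Convex ℝ C0 := by
    rcases hdm with ⟨_, _, _, _, _, _, _, _, h, _⟩ | ⟨_, _, _, _, _, h, _⟩ <;> exact h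
  -- three key facts about the DM's relation against constant acts
  have hA : ∀ f, IsAct X f → ∀ x ∈ X, (∃ q ∈ C0, EU u f q ≤ u x) →
      ¬ R0 f (constAct S x) := by
    rintro f hf x hx ⟨q1, hq1, h1⟩ hR
    have himg : IsCompact (EU u f '' C0) := hC0cpt.image (EU_continuous hf u)
    rcases hdm with ⟨_, _, _, _, _, _, _, _, _, _, _, hiff⟩ | ⟨_, _, _, _, _, _, hiff⟩
    · rw [hiff f _ hf (isAct_const hx)] at hR
      rw [(minmax_const hC0ne hC0P x u).1] at hR
      have h2 : minEU u C0 f ≤ EU u f q1 := csInf_le himg.bddBelow ⟨q1, hq1, rfl⟩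
      linarith [hR.1]
    · rw [hiff f _ hf (isAct_const hx)] at hR
      have h2 := hR q1 hq1
      rw [EU_const (hC0P hq1) x u] at h2
      linarith
  have hA' : ∀ f, IsAct X f → ∀ x ∈ X, (∃ q ∈ C0, u x ≤ EU u f q) →
      ¬ R0 (constAct S x) f := by
    rintro f hf x hx ⟨q1, hq1, h1⟩ hR
    have himg : IsCompact (EU u f '' C0) := hC0cpt.image (EU_continuous hf u)
    rcases hdm with ⟨_, _, _, _, _, _, _, _, _, _, _, hiff⟩ | ⟨_, _, _, _, _, _, hiff⟩
    · rw [hiff _ f (isAct_const hx) hf] at hR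
      rw [(minmax_const hC0ne hC0P x u).2] at hR
      have h2 : EU u f q1 ≤ maxEU u C0 f := le_csSup himg.bddAbove ⟨q1, hq1, rfl⟩
      linarith [hR.2]
    · rw [hiff _ f (isAct_const hx) hf] at hR
      have h2 := hR q1 hq1
      rw [EU_const (hC0P hq1) x u] at h2
      linarith
  have hB : ∀ f, IsAct X f → ∀ x ∈ X, (∀ q ∈ C0, EU u f q < u x) →
      R0 (constAct S x) f := by
    intro f hf x hx hall
    have himg : IsCompact (EU u f '' C0) := hC0cpt.image (EU_continuous hf u)
    have hne' : (EU u f '' C0).Nonempty := hC0ne.image _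
    rcases hdm with ⟨_, _, _, _, _, _, _, _, _, _, _, hiff⟩ | ⟨_, _, _, _, _, _, hiff⟩
    · rw [hiff _ f (isAct_const hx) hf,
        (minmax_const hC0ne hC0P x u).1, (minmax_const hC0ne hC0P x u).2]
      obtain ⟨qs, hqs, hqe⟩ := himg.sSup_mem hne'
      constructor
      · have h1 : minEU u C0 f ≤ EU u f qs := csInf_le himg.bddBelow ⟨qs, hqs, rfl⟩
        have h2 := hall qs hqs
        linarith
      · have h3 : maxEU u C0 f = EU u f qs := hqe.symm
        rw [h3]
        exact hall qs hqs
    · rw [hiff _ f (isAct_const hx) hf]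
      intro p hp
      rw [EU_const (hC0P hp) x u]
      exact hall p hp
  constructor
  · -- caution → inclusion
    intro hcaution
    apply convexHull_min ?_ hC0cvx
    rw [Set.iUnion_subset_iff]
    intro i p hp
    by_contra hpC0
    obtain ⟨-, -, hCine, hCiP, hCicpt, -, hiffi⟩ := hexp i
    obtain ⟨φ, cc, hφlt, hφp⟩ :=
      geometric_hahn_banach_closed_point hC0cvx hC0cpt.isClosed hpC0
    obtain ⟨F, hφrep⟩ := clm_pi_finite_support φ
    set a : MSet S → ℝ := fun A => φ (Pi.single A 1) with ha
    set c : Finset (MSet S) → ℝ := fun T => ∑ A ∈ T, a A with hc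
    obtain ⟨x, hx, y, hy, hxy⟩ : ∃ x ∈ X, ∃ y ∈ X, u x < u y := by
      obtain ⟨x₀, hx₀, y₀, hy₀, hne'⟩ := hu_nc
      rcases hne'.lt_or_gt with h | h
      · exact ⟨x₀, hx₀, y₀, hy₀, h⟩
      · exact ⟨y₀, hy₀, x₀, hx₀, h⟩
    have hPne : (F.powerset).Nonempty := ⟨∅, Finset.empty_mem_powerset F⟩
    set m := F.powerset.inf' hPne c with hm
    set M := F.powerset.sup' hPne c with hM
    have hmM : m ≤ M :=
      le_trans (Finset.inf'_le c (Finset.empty_mem_powerset F))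
        (Finset.le_sup' c (Finset.empty_mem_powerset F))
    set α := (u y - u x) / (M - m + 1) with hα
    have hαpos : 0 < α := div_pos (by linarith) (by linarith)
    set β := u x - α * m with hβ
    have hrange : ∀ T ∈ F.powerset, u x ≤ α * c T + β ∧ α * c T + β ≤ u y := by
      intro T hT
      have h1 : m ≤ c T := Finset.inf'_le c hT
      have h2 : c T ≤ M := Finset.le_sup' c hT
      have h3 : 0 ≤ α * (c T - m) := mul_nonneg hαpos.le (by linarith)
      have h4 : α * (M - m) ≤ u y - u x := by
        rw [hα, div_mul_eq_mul_div, div_le_iff₀ (by linarith)]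
        nlinarith
      have h5 : α * (c T - m) ≤ α * (M - m) :=
        mul_le_mul_of_nonneg_left (by linarith) hαpos.le
      constructor
      · rw [hβ]; nlinarith
      · rw [hβ]; nlinarith
    set G : ℝ → V := fun t =>
      ((t - u x) / (u y - u x)) • y + (1 - (t - u x) / (u y - u x)) • x with hG
    have hGmem : ∀ t, u x ≤ t → t ≤ u y → G t ∈ X := by
      intro t h1 h2
      have h3 : (0:ℝ) ≤ (t - u x) / (u y - u x) := div_nonneg (by linarith) (by linarith)
      have h4 : (t - u x) / (u y - u x) ≤ 1 := by
        rw [div_le_one (by linarith)]; linarith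
      show ((t - u x) / (u y - u x)) • y + (1 - (t - u x) / (u y - u x)) • x ∈ X
      exact hX hy hx h3 (by linarith) (by ring)
    have hGu : ∀ t, u x ≤ t → t ≤ u y → u (G t) = t := by
      intro t h1 h2
      have h3 : (0:ℝ) ≤ (t - u x) / (u y - u x) := div_nonneg (by linarith) (by linarith)
      have h4 : (t - u x) / (u y - u x) ≤ 1 := by
        rw [div_le_one (by linarith)]; linarith
      have h5 := hu_aff y hy x hx ((t - u x) / (u y - u x)) h3 h4
      show u (((t - u x) / (u y - u x)) • y + (1 - (t - u x) / (u y - u x)) • x) = t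
      rw [h5]
      have hne' : u y - u x ≠ 0 := ne_of_gt (by linarith)
      linear_combination div_mul_cancel₀ (t - u x) hne'
    set f : S → V := fun s => G (α * c (Tof F s) + β) with hfdef
    have hTofP : ∀ s : S, Tof F s ∈ F.powerset :=
      fun s => Finset.mem_powerset.mpr (Tof_subset F s)
    have hcrange : ∀ s : S, u x ≤ α * c (Tof F s) + β ∧ α * c (Tof F s) + β ≤ u y :=
      fun s => hrange _ (hTofP s)
    have hufs : ∀ s, u (f s) = α * c (Tof F s) + β :=
      fun s => hGu _ (hcrange s).1 (hcrange s).2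
    have hufcell : ∀ T ∈ F.powerset, ∀ s ∈ cellOf F T, u (f s) = α * c T + β := by
      intro T hT s hs
      rw [hufs s, ← eq_Tof_of_mem_cellOf (Finset.mem_powerset.mp hT) hs]
    have hfact : IsAct X f := by
      refine ⟨fun s => hGmem _ (hcrange s).1 (hcrange s).2, ?_, ?_⟩
      · apply Set.Finite.subset (F.powerset.finite_toSet.image (fun T => G (α * c T + β)))
        rintro _ ⟨s, rfl⟩
        exact ⟨Tof F s, hTofP s, rfl⟩
      · intro v
        have he : f ⁻¹' {v}
            = ⋃ T ∈ F.powerset.filter (fun T => G (α * c T + β) = v), cellOf F T := by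
          ext s
          simp only [Set.mem_preimage, Set.mem_singleton_iff, Set.mem_iUnion,
            Finset.mem_filter]
          constructor
          · intro hv
            exact ⟨Tof F s, ⟨hTofP s, hv⟩, mem_cellOf_Tof F s⟩
          · rintro ⟨T, ⟨hTP, hTv⟩, hsT⟩
            rw [← hTv]
            show G (α * c (Tof F s) + β) = G (α * c T + β)
            rw [eq_Tof_of_mem_cellOf (Finset.mem_powerset.mp hTP) hsT]
        rw [he]
        exact Finset.measurableSet_biUnion _ (fun T _ => cellOf_measurable F T)
    have hsimp : IsSimpleFn (fun s => u (f s)) := isSimpleFn_comp hfact u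
    have hEUval : ∀ q ∈ ProbCharges S, EU u f q = α * φ q + β := by
      intro q hq
      have h1 : fInt q (fun s => u (f s)) = ∑ T ∈ F.powerset,
          (α * c T + β) * q ⟨cellOf F T, (cellOf_partition F).1 T⟩ :=
        fInt_partition hq (cellOf_partition F) (fun T => α * c T + β) hufcell
      have h2 : ∑ T ∈ F.powerset, q ⟨cellOf F T, (cellOf_partition F).1 T⟩ = 1 :=
        charge_partition_sum hq (cellOf_partition F)
      have h3 : ∑ T ∈ F.powerset, c T * q ⟨cellOf F T, (cellOf_partition F).1 T⟩
          = ∑ A ∈ F, a A * q A := cell_sum_eq hq F a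
      have h4 : ∑ A ∈ F, a A * q A = φ q := by
        rw [hφrep q]
        exact Finset.sum_congr rfl (fun A _ => mul_comm _ _)
      have h5 : ∑ T ∈ F.powerset, (α * c T + β) * q ⟨cellOf F T, (cellOf_partition F).1 T⟩
          = α * (∑ T ∈ F.powerset, c T * q ⟨cellOf F T, (cellOf_partition F).1 T⟩)
            + β * (∑ T ∈ F.powerset, q ⟨cellOf F T, (cellOf_partition F).1 T⟩) := by
        rw [Finset.mul_sum, Finset.mul_sum, ← Finset.sum_add_distrib]
        exact Finset.sum_congr rfl (fun T _ => by ring)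
      show fInt q (fun s => u (f s)) = α * φ q + β
      rw [h1, h5, h2, h3, h4, mul_one]
    have hEUbounds : ∀ q ∈ ProbCharges S, u x ≤ EU u f q ∧ EU u f q ≤ u y := by
      intro q hq
      exact fInt_bounds hq hsimp (fun s => by rw [hufs s]; exact (hcrange s).1)
        (fun s => by rw [hufs s]; exact (hcrange s).2)
    have hpP : p ∈ ProbCharges S := hCiP hp
    obtain ⟨q0, hq0⟩ := hC0ne
    -- key numeric facts
    have hEUp : EU u f p = α * φ p + β := hEUval p hpP
    have hEUq0 : EU u f q0 = α * φ q0 + β := hEUval q0 (hC0P hq0)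
    have hup : α * cc + β < EU u f p := by
      rw [hEUp]
      have := mul_lt_mul_of_pos_left hφp hαpos
      linarith
    have hlow : ∀ q ∈ C0, EU u f q < α * cc + β := by
      intro q hq
      rw [hEUval q (hC0P hq)]
      have := mul_lt_mul_of_pos_left (hφlt q hq) hαpos
      linarith
    have himgCi : IsCompact (EU u f '' Ci i) := hCicpt.image (EU_continuous hfact u)
    have hneCi : (EU u f '' Ci i).Nonempty := hCine.image _
    obtain ⟨qi, hqi, hqie⟩ := himgCi.sInf_mem hneCi
    set t0 := max (α * cc + β) (sInf (EU u f '' Ci i)) with ht0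
    have ht0x : u x ≤ t0 := by
      have h1 : u x ≤ EU u f q0 := (hEUbounds q0 (hC0P hq0)).1
      have h2 := hlow q0 hq0
      have : u x ≤ α * cc + β := by linarith
      exact le_trans this (le_max_left _ _)
    have ht0y : t0 ≤ u y := by
      apply max_le
      · have := (hEUbounds p hpP).2
        linarith
      · have h1 : sInf (EU u f '' Ci i) ≤ EU u f p := csInf_le himgCi.bddBelow ⟨p, hp, rfl⟩
        have := (hEUbounds p hpP).2
        linarith
    have hux0 : u (G t0) = t0 := hGu t0 ht0x ht0y
    have hx0X : G t0 ∈ X := hGmem t0 ht0x ht0y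
    -- f is incomparable with (G t0) for expert i
    have hinc : Incomp (Rexp i) f (constAct S (G t0)) := by
      constructor
      · rw [hiffi f _ hfact (isAct_const hx0X)]
        intro hall
        have h2 := hall qi hqi
        rw [EU_const (hCiP hqi) (G t0) u, hux0] at h2
        rw [hqie] at h2
        exact absurd h2 (not_lt.mpr (le_max_right _ _))
      · rw [hiffi _ f (isAct_const hx0X) hfact]
        intro hall
        have h2 := hall p hp
        rw [EU_const hpP (G t0) u, hux0] at h2
        have h3 : t0 ≤ EU u f p :=
          max_le hup.le (csInf_le himgCi.bddBelow ⟨p, hp, rfl⟩)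
        exact absurd h2 (not_lt.mpr h3)
    have hcontr := hcaution f hfact (G t0) hx0X ⟨i, hinc⟩
    refine hcontr.2 (hB f hfact (G t0) hx0X ?_)
    intro q hq
    rw [hux0]
    exact lt_of_lt_of_le (hlow q hq) (le_max_left _ _)
  · -- inclusion → caution
    rintro hsub f hf x hx ⟨i, hincomp⟩
    obtain ⟨-, -, hCine, hCiP, -, -, hiffi⟩ := hexp i
    have hCisub : Ci i ⊆ C0 :=
      (Set.subset_iUnion Ci i).trans ((subset_convexHull ℝ _).trans hsub)
    obtain ⟨hnRfx, hnRxf⟩ := hincomp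
    rw [hiffi f _ hf (isAct_const hx)] at hnRfx
    push_neg at hnRfx
    obtain ⟨q1, hq1, h1⟩ := hnRfx
    rw [hiffi _ f (isAct_const hx) hf] at hnRxf
    push_neg at hnRxf
    obtain ⟨q2, hq2, h2⟩ := hnRxf
    rw [EU_const (hCiP hq1) x u] at h1
    rw [EU_const (hCiP hq2) x u] at h2
    exact ⟨hA f hf x hx ⟨q1, hCisub hq1, h1⟩, hA' f hf x hx ⟨q2, hCisub hq2, h2⟩⟩

end Statement
end

section
/- Suppose the binary relation ≻ on F satisfies Axioms 1, 2, 3 and 5. Then for every f ∈ F, the set {x ∈ X : x ⋈ f} is non-empty. -/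
/-!
Framework: Anscombe–Aumann acts, finitely additive probability measures,
simple acts, hope-and-prepare preferences (Bastianello–Hill style setup).
-/

open Set

/-!
Suppose every outcome were comparable to `f`. If some outcome `a` is better and some outcome
`b` worse than `f`, the mixtures `γa + (1-γ)b` better than `f` and those worse than `f` form,
by continuity, two disjoint open sets covering `[0,1]` and containing `1` and `0` respectively,
which contradicts connectedness. If every outcome is better than `f`, let `y` be the worst
outcome of `f`. An outcome `p ≻ y` exists: otherwise `y ≻ q` for the pair `p ≻ q` given by
non-triviality, and monotonicity yields `f ≻ q`. Continuity at `α = 1` gives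
`y ≻ αf + (1-α)p` for some `α < 1`, while certainty independence makes every outcome
`αf(s) + (1-α)p` at least as good as `αy + (1-α)p ≻ y`, so monotonicity yields the reverse
preference. The axioms are invariant under reversing `≻`, which covers the remaining case.
-/

open Filter Topology MeasureTheory

theorem exists_forall_not_rel_of_finite_range {ι α : Type*} [Nonempty ι] {f : ι → α}
    (hf : (range f).Finite) {r : α → α → Prop} (hirr : ∀ i, ¬ r (f i) (f i))
    (htrans : ∀ i j k, r (f i) (f j) → r (f j) (f k) → r (f i) (f k)) :
    ∃ i, ∀ j, ¬ r (f i) (f j) := by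
  have : Finite (range f) := hf
  let r' : range f → range f → Prop := fun a b => r b a
  have : Std.Irrefl r' := ⟨by rintro ⟨_, i, rfl⟩; exact hirr i⟩
  have : IsTrans (range f) r' :=
    ⟨by rintro ⟨_, i, rfl⟩ ⟨_, j, rfl⟩ ⟨_, k, rfl⟩ hij hjk; exact htrans k j i hjk hij⟩
  obtain ⟨⟨_, i, rfl⟩, -, hmin⟩ := (Finite.wellFounded_of_trans_of_irrefl r').has_min univ
    ⟨⟨_, Classical.arbitrary ι, rfl⟩, trivial⟩
  exact ⟨i, fun j => hmin ⟨f j, j, rfl⟩ trivial⟩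

theorem exists_mem_Ioo_of_isOpen_of_one {P : ℝ → Prop}
    (hP : IsOpen {α : Icc (0 : ℝ) 1 | P α}) (h1 : P 1) : ∃ α ∈ Ioo (0 : ℝ) 1, P α := by
  have hnhds : ∀ᶠ t in 𝓝[<] (1 : ℝ), P (projIcc 0 1 zero_le_one t) :=
    nhdsWithin_le_nhds <| (continuous_projIcc.tendsto 1).eventually <|
      hP.mem_nhds (by simpa using h1)
  obtain ⟨t, hPt, ht⟩ := (hnhds.and (Ioo_mem_nhdsLT zero_lt_one)).exists
  exact ⟨t, ht, by rwa [projIcc_of_mem _ (Ioo_subset_Icc_self ht)] at hPt⟩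

@[simp]
theorem mixAct_one {S V : Type*} [AddCommGroup V] [Module ℝ V] (f g : S → V) :
    mixAct 1 f g = f := by
  funext s; simp [mixAct]

@[simp]
theorem mixAct_zero {S V : Type*} [AddCommGroup V] [Module ℝ V] (f g : S → V) :
    mixAct 0 f g = g := by
  funext s; simp [mixAct]

section Order

variable {S : Type*} [MeasurableSpace S] {V : Type*} {X : Set V}
  {R : (S → V) → (S → V) → Prop}

theorem isAct_constAct {x : V} (hx : x ∈ X) : IsAct X (constAct S x) :=
  ⟨fun _ => hx, (SimpleFunc.const S x).finite_range, (SimpleFunc.const S x).measurableSet_fiber⟩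

theorem IsAct.comp {W : Type*} {Y : Set W} {f : S → V} (hf : IsAct X f) {φ : V → W}
    (hφ : MapsTo φ X Y) : IsAct Y (φ ∘ f) := by
  let F : SimpleFunc S V := ⟨f, hf.2.2, hf.2.1⟩
  have hF : ⇑(F.map φ) = φ ∘ f := SimpleFunc.coe_map φ F
  exact ⟨fun s => hφ (hf.1 s), hF ▸ (F.map φ).finite_range, hF ▸ (F.map φ).measurableSet_fiber⟩

theorem PrefAx1.swap (h : PrefAx1 X R) : PrefAx1 X (Function.swap R) := by
  obtain ⟨hasymm, htrans, ⟨x, hx, y, hy, hxy⟩, hneg⟩ := h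
  exact ⟨fun f g hf hg => hasymm g f hg hf,
    fun f g k hf hg hk hfg hgk => htrans k g f hk hg hf hgk hfg,
    ⟨y, hy, x, hx, hxy⟩, fun u hu v hv w hw huv hvw => hneg w hw v hv u hu hvw huv⟩

theorem PrefAx5.swap (h : PrefAx5 X R) : PrefAx5 X (Function.swap R) :=
  fun f g hf hg => h g f hg hf

theorem PrefAx1.const_pref_of_not_pref_of_pref (h : PrefAx1 X R) {x y z : V} (hx : x ∈ X)
    (hy : y ∈ X) (hz : z ∈ X) (hyx : ¬ R (constAct S y) (constAct S x))
    (hyz : R (constAct S y) (constAct S z)) : R (constAct S x) (constAct S z) :=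
  not_not.1 fun hxz => h.2.2.2 y hy x hx z hz hyx hxz hyz

end Order

section Mixtures

variable {S : Type*} [MeasurableSpace S] {V : Type*} [AddCommGroup V] [Module ℝ V]
  {X : Set V} {R : (S → V) → (S → V) → Prop}

theorem IsAct.mixAct_constAct (hX : Convex ℝ X) {f : S → V} (hf : IsAct X f)
    {z : V} (hz : z ∈ X) {α : ℝ} (hα₀ : 0 ≤ α) (hα₁ : α ≤ 1) :
    IsAct X (mixAct α f (constAct S z)) :=
  hf.comp (φ := fun v => α • v + (1 - α) • z) fun _ hv =>
    hX hv hz hα₀ (sub_nonneg.2 hα₁) (add_sub_cancel α 1)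

theorem PrefAx2.swap (h : PrefAx2 X R) : PrefAx2 X (Function.swap R) :=
  fun f g k hf hg hk => (h f g k hf hg hk).symm

theorem PrefAx3.swap (h : PrefAx3 X R) : PrefAx3 X (Function.swap R) :=
  fun f g hf hg => h g f hg hf

theorem PrefAx3.const_iff (h : PrefAx3 X R) {x y z : V} (hx : x ∈ X) (hy : y ∈ X) (hz : z ∈ X)
    {α : ℝ} (hα₀ : 0 < α) (hα₁ : α < 1) :
    R (constAct S x) (constAct S y) ↔
      R (constAct S (α • x + (1 - α) • z)) (constAct S (α • y + (1 - α) • z)) :=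
  h _ _ (isAct_constAct hx) (isAct_constAct hy) z hz α hα₀ hα₁

theorem mix_const_pref_of_pref_of_not_pref (h1 : PrefAx1 X R) (h3 : PrefAx3 X R)
    (hX : Convex ℝ X) {p y z : V} (hp : p ∈ X) (hy : y ∈ X) (hz : z ∈ X)
    (hpy : R (constAct S p) (constAct S y)) (hyz : ¬ R (constAct S y) (constAct S z))
    {α : ℝ} (hα₀ : 0 < α) (hα₁ : α < 1) :
    R (constAct S (α • z + (1 - α) • p)) (constAct S y) := by
  have hmix_y : R (constAct S (α • y + (1 - α) • p)) (constAct S y) := by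
    have := (h3.const_iff hp hy hy (sub_pos.2 hα₁) (sub_lt_self 1 hα₀)).1 hpy
    convert this using 2 <;> module
  have hmix : ¬ R (constAct S (α • y + (1 - α) • p)) (constAct S (α • z + (1 - α) • p)) :=
    (h3.const_iff hy hz hp hα₀ hα₁).not.1 hyz
  have hmem : ∀ v ∈ X, α • v + (1 - α) • p ∈ X := fun v hv =>
    hX hv hp hα₀.le (sub_nonneg.2 hα₁.le) (add_sub_cancel α 1)
  exact h1.const_pref_of_not_pref_of_pref (hmem z hz) (hmem y hy) hy hmix hmix_y

end Mixtures

section Incomparability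

variable {S : Type*} [MeasurableSpace S] {V : Type*} [AddCommGroup V] [Module ℝ V]
  {X : Set V} {R : (S → V) → (S → V) → Prop}

theorem exists_incomp_of_const_pref_of_pref_const (h1 : PrefAx1 X R) (h2 : PrefAx2 X R)
    (hX : Convex ℝ X) {a b : V} (ha : a ∈ X) (hb : b ∈ X) {f : S → V} (hf : IsAct X f)
    (haf : R (constAct S a) f) (hfb : R f (constAct S b)) :
    ∃ x ∈ X, Incomp R (constAct S x) f := by
  have hmem : ∀ γ : Icc (0 : ℝ) 1, (γ : ℝ) • a + (1 - (γ : ℝ)) • b ∈ X := fun γ =>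
    hX ha hb γ.2.1 (sub_nonneg.2 γ.2.2) (add_sub_cancel _ 1)
  by_contra! hcomp
  obtain ⟨hU, hV⟩ := h2 _ _ f (isAct_constAct ha) (isAct_constAct hb) hf
  have hcover : univ ⊆ {γ : Icc (0 : ℝ) 1 | R (mixAct γ (constAct S a) (constAct S b)) f} ∪
      {γ : Icc (0 : ℝ) 1 | R f (mixAct γ (constAct S a) (constAct S b))} := fun γ _ =>
    not_and_or.1 (hcomp _ (hmem γ)) |>.imp not_not.1 not_not.1
  obtain ⟨γ, -, hγU, hγV⟩ := isPreconnected_univ _ _ hU hV hcover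
    ⟨1, trivial, by simpa using haf⟩ ⟨0, trivial, by simpa using hfb⟩
  exact h1.1 _ _ (isAct_constAct (hmem γ)) hf hγU hγV

theorem exists_not_const_pref [Nonempty S] (h1 : PrefAx1 X R) (h2 : PrefAx2 X R)
    (h3 : PrefAx3 X R) (h5 : PrefAx5 X R) (hX : Convex ℝ X) {f : S → V} (hf : IsAct X f) :
    ∃ x ∈ X, ¬ R (constAct S x) f := by
  by_contra! hall
  obtain ⟨p, hp, q, hq, hpq⟩ := h1.2.2.1
  obtain ⟨s₀, hworst⟩ := exists_forall_not_rel_of_finite_range hf.2.1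
    (r := fun x y => R (constAct S x) (constAct S y))
    (fun s h => h1.1 _ _ (isAct_constAct (hf.1 s)) (isAct_constAct (hf.1 s)) h h)
    (fun i j k => h1.2.1 _ _ _ (isAct_constAct (hf.1 i)) (isAct_constAct (hf.1 j))
      (isAct_constAct (hf.1 k)))
  have hy := hf.1 s₀
  by_cases hpy : R (constAct S p) (constAct S (f s₀))
  · obtain ⟨α, ⟨hα₀, hα₁⟩, hyα⟩ := exists_mem_Ioo_of_isOpen_of_one
      (P := fun α => R (constAct S (f s₀)) (mixAct α f (constAct S p)))
      (h2 f _ _ hf (isAct_constAct hp) (isAct_constAct hy)).2 (by simpa using hall _ hy)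
    have hmix := hf.mixAct_constAct hX hp hα₀.le hα₁.le
    have hαy : R (mixAct α f (constAct S p)) (constAct S (f s₀)) :=
      h5 _ _ hmix (isAct_constAct hy) fun s =>
        mix_const_pref_of_pref_of_not_pref h1 h3 hX hp hy (hf.1 s) hpy (hworst s) hα₀ hα₁
    exact h1.1 _ _ hmix (isAct_constAct hy) hαy hyα
  · have hyq := h1.const_pref_of_not_pref_of_pref hy hp hq hpy hpq
    have hfq : R f (constAct S q) := h5 _ _ hf (isAct_constAct hq) fun s =>
      h1.const_pref_of_not_pref_of_pref (hf.1 s) hy hq (hworst s) hyq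
    exact h1.1 _ _ hf (isAct_constAct hq) hfq (hall q hq)

end Incomparability

section Statement

variable {S : Type*} [MeasurableSpace S] [Nonempty S]
variable {V : Type*} [AddCommGroup V] [Module ℝ V]

theorem statement14_general (X : Set V) (hX : Convex ℝ X)
    (R : (S → V) → (S → V) → Prop)
    (hax : PrefAx1 X R ∧ PrefAx2 X R ∧ PrefAx3 X R ∧ PrefAx5 X R)
    (f : S → V) (hf : IsAct X f) :
    ∃ x ∈ X, Incomp R (constAct S x) f := by
  obtain ⟨h1, h2, h3, h5⟩ := hax
  obtain ⟨a, ha, hfa⟩ := exists_not_const_pref h1.swap h2.swap h3.swap h5.swap hX hf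
  obtain ⟨b, hb, hbf⟩ := exists_not_const_pref h1 h2 h3 h5 hX hf
  by_cases haf : R (constAct S a) f
  · by_cases hfb : R f (constAct S b)
    · exact exists_incomp_of_const_pref_of_pref_const h1 h2 hX ha hb hf haf hfb
    · exact ⟨b, hb, hbf, hfb⟩
  · exact ⟨a, ha, haf, hfa⟩

/-- Lemma 5: under Axioms 1, 2, 3 and 5, every act is
incomparable to some constant act. -/
theorem statement14 (X : Set V) (hX : Convex ℝ X) (hX2 : ∃ x ∈ X, ∃ y ∈ X, x ≠ y)
    (R : (S → V) → (S → V) → Prop)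
    (hax : PrefAx1 X R ∧ PrefAx2 X R ∧ PrefAx3 X R ∧ PrefAx5 X R)
    (f : S → V) (hf : IsAct X f) :
    ∃ x ∈ X, Incomp R (constAct S x) f :=
  statement14_general X hX R hax f hf

end Statement
end
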